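/- Leibniz formula mixing Δ and ∇ derivatives: Let T be a bounded time scale, u, v : T → ℝⁿ, and t ∈ T^κ_κ. If σ is ∇-differentiable at t, u is Δ-differentiable at t, and v is ∇-differentiable at t, then the scalar function (u ∘ σ) · v is ∇-differentiable at t with ((u ∘ σ) · v)^∇(t) = u(t) · v^∇(t) + σ^∇(t) (u^Δ(t) · v(t)), where · denotes the Euclidean inner product. -/

import Mathlib

open Set Filter Topology RealInnerProductSpace

open Classical in
/-- Forward jump operator of a time scale `T`, with convention `inf ∅ = sSup T`. -/
noncomputable def tsSigma (T : Set ℝ) (t : ℝ) : ℝ :=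
  if ({s | s ∈ T ∧ t < s}).Nonempty then sInf {s | s ∈ T ∧ t < s} else sSup T

open Classical in
/-- Backward jump operator of a time scale `T`, with convention `sup ∅ = sInf T`. -/
noncomputable def tsRho (T : Set ℝ) (t : ℝ) : ℝ :=
  if ({s | s ∈ T ∧ s < t}).Nonempty then sSup {s | s ∈ T ∧ s < t} else sInf T

/-- `u` is Δ-differentiable at `t` (w.r.t. the time scale `T`) with derivative `L`. -/
def HasDeltaDerivAt {E : Type*} [NormedAddCommGroup E] [NormedSpace ℝ E]
    (T : Set ℝ) (u : ℝ → E) (t : ℝ) (L : E) : Prop :=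
  Filter.Tendsto (fun s => (tsSigma T t - s)⁻¹ • (u (tsSigma T t) - u s))
    (nhdsWithin t (T \ {tsSigma T t})) (nhds L)

/-- `u` is ∇-differentiable at `t` (w.r.t. the time scale `T`) with derivative `L`. -/
def HasNablaDerivAt {E : Type*} [NormedAddCommGroup E] [NormedSpace ℝ E]
    (T : Set ℝ) (u : ℝ → E) (t : ℝ) (L : E) : Prop :=
  Filter.Tendsto (fun s => (s - tsRho T t)⁻¹ • (u s - u (tsRho T t)))
    (nhdsWithin t (T \ {tsRho T t})) (nhds L)

/-- `T^κ = {t ∈ T : t ≤ ρ(max T)}`. -/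
def Tup (T : Set ℝ) : Set ℝ := {t | t ∈ T ∧ t ≤ tsRho T (sSup T)}

/-- `T_κ = {t ∈ T : σ(min T) ≤ t}`. -/
def Tlow (T : Set ℝ) : Set ℝ := {t | t ∈ T ∧ tsSigma T (sInf T) ≤ t}

/-!
Everything is phrased through `slope`: the ∇-quotient at `t` is `slope · (ρ t)` and the Δ-quotient
is `slope · (σ t)`. The product rule for slopes gives
`slope ⟪u ∘ σ, v⟫ (ρ t) s = ⟪slope (u ∘ σ) (ρ t) s, v s⟫ + ⟪u (σ (ρ t)), slope v (ρ t) s⟫`,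
and the chain rule `slope (u ∘ σ) a s = slope σ a s • slope u (σ a) (σ s)` reduces `(u ∘ σ)^∇`
to `σ^∇ • u^Δ` as soon as `σ (ρ t) = t`. That identity holds unless `t` is left-dense and
right-scattered; there the ∇-quotient of `σ` is at least `(σ t - t) / (t - s)` and blows up, so
`σ` can only be ∇-differentiable at `t` if the limit filter is trivial.
-/

section Slope

variable {E : Type*} [NormedAddCommGroup E] [NormedSpace ℝ E]

theorem slope_comp_eq_smul_slope (u : ℝ → E) (f : ℝ → ℝ) (a b : ℝ) :
    slope (u ∘ f) a b = slope f a b • slope u (f a) (f b) := by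
  by_cases h : f b = f a
  · simp [slope_def_module, h]
  · have h' : f b - f a ≠ 0 := sub_ne_zero.2 h
    rw [slope_def_module, slope_def_field, slope_def_module, smul_smul]
    congr 1
    field_simp

theorem tendsto_of_tendsto_slope {v : ℝ → E} {S : Set ℝ} {a t : ℝ} {M : E} (ht : t ∈ S)
    (h : Tendsto (slope v a) (𝓝[S \ {a}] t) (𝓝 M)) : Tendsto v (𝓝[S \ {a}] t) (𝓝 (v t)) := by
  have hlim : Tendsto (fun s => (s - a) • slope v a s + v a) (𝓝[S \ {a}] t)
      (𝓝 ((t - a) • M + v a)) :=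
    ((((continuous_sub_right a).tendsto t).mono_left nhdsWithin_le_nhds).smul h).add_const _
  have hM : (t - a) • M + v a = v t := by
    rcases eq_or_ne t a with rfl | hta
    · simp
    · have hMt : slope v a t = M :=
        tendsto_nhds_unique (tendsto_pure_nhds _ t) (h.mono_left (pure_le_nhdsWithin ⟨ht, hta⟩))
      rw [← hMt]
      exact sub_smul_slope_vadd v a t
  rw [← hM]
  exact hlim.congr fun s => sub_smul_slope_vadd v a s

theorem tendsto_slope_comp {u : ℝ → E} {f : ℝ → ℝ} {l : Filter ℝ} {S : Set ℝ} {a d : ℝ} {L : E}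
    (hf : Tendsto (slope f a) l (𝓝 d)) (hfS : Tendsto f l (𝓝[S] (f a)))
    (hu : Tendsto (slope u (f a)) (𝓝[S \ {f a}] (f a)) (𝓝 L)) :
    Tendsto (slope (u ∘ f) a) l (𝓝 (d • L)) := by
  classical
  -- Carathéodory's trick: `slope u (f a)` extended by `L` at `f a` is continuous there, and
  -- wherever `f s = f a` the factor `slope f a s` vanishes anyway.
  set g := Function.update (slope u (f a)) (f a) L
  have hg : Tendsto (g ∘ f) l (𝓝 L) := by
    simpa [g] using (continuousWithinAt_update_same.2 hu).tendsto.comp hfS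
  refine (hf.smul hg).congr fun s => ?_
  rw [slope_comp_eq_smul_slope]
  by_cases h : f s = f a
  · simp [slope_def_field, h]
  · simp [g, Function.update_of_ne h]

theorem slope_inner {F : Type*} [NormedAddCommGroup F] [InnerProductSpace ℝ F] (f g : ℝ → F)
    (a b : ℝ) : slope (fun s => ⟪f s, g s⟫) a b = ⟪slope f a b, g b⟫ + ⟪f a, slope g a b⟫ := by
  simp only [slope_def_module, smul_eq_mul, real_inner_smul_left, real_inner_smul_right,
    inner_sub_left, inner_sub_right]
  ring

end Slope

section TimeScale

variable {T : Set ℝ} {t : ℝ}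

theorem tsSigma_mem (hne : T.Nonempty) (hbd : Bornology.IsBounded T) (hcl : IsClosed T)
    (t : ℝ) : tsSigma T t ∈ T := by
  unfold tsSigma
  split_ifs with h
  · exact closure_minimal (fun x hx => hx.1) hcl
      (csInf_mem_closure h (hbd.bddBelow.mono fun x hx => hx.1))
  · exact hcl.csSup_mem hne hbd.bddAbove

theorem tsSigma_le (hbd : BddBelow T) {x : ℝ} (hx : x ∈ T) (htx : t < x) : tsSigma T t ≤ x := by
  unfold tsSigma
  rw [if_pos ⟨x, hx, htx⟩]
  exact csInf_le (hbd.mono fun y hy => hy.1) ⟨hx, htx⟩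

theorem le_tsSigma (hbd : BddAbove T) (ht : t ∈ T) : t ≤ tsSigma T t := by
  unfold tsSigma
  split_ifs with h
  · exact le_csInf h fun b hb => hb.2.le
  · exact le_csSup hbd ht

theorem tsRho_le (hbd : BddBelow T) (ht : t ∈ T) : tsRho T t ≤ t := by
  unfold tsRho
  split_ifs with h
  · exact csSup_le h fun b hb => hb.2.le
  · exact csInf_le hbd ht

theorem le_tsRho (hbd : BddAbove T) {x : ℝ} (hx : x ∈ T) (hxt : x < t) : x ≤ tsRho T t := by
  unfold tsRho
  rw [if_pos ⟨x, hx, hxt⟩]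
  exact le_csSup (hbd.mono fun y hy => hy.1) ⟨hx, hxt⟩

theorem tsSigma_tsRho (hbd : Bornology.IsBounded T) (ht : t ∈ T) (hρt : tsRho T t < t) :
    tsSigma T (tsRho T t) = t := by
  refine le_antisymm (tsSigma_le hbd.bddBelow ht hρt) ?_
  unfold tsSigma
  rw [if_pos ⟨t, ht, hρt⟩]
  exact le_csInf ⟨t, ht, hρt⟩ fun b hb => not_lt.1 fun hbt =>
    (le_tsRho hbd.bddAbove hb.1 hbt).not_gt hb.2

theorem nhdsWithin_diff_singleton_eq_pure_of_isolated (hbd : Bornology.IsBounded T) (ht : t ∈ T)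
    (hρt : tsRho T t < t) (hσt : t < tsSigma T t) {x : ℝ} (hx : x ≠ t) :
    𝓝[T \ {x}] t = pure t := by
  have hT : T \ {x} ∩ Ioo (tsRho T t) (tsSigma T t) = {t} := by
    refine Subset.antisymm (fun s ⟨⟨hs, _⟩, hρs, hsσ⟩ => ?_) ?_
    · rcases lt_trichotomy s t with hst | rfl | hts
      · exact absurd (le_tsRho hbd.bddAbove hs hst) hρs.not_ge
      · rfl
      · exact absurd (tsSigma_le hbd.bddBelow hs hts) hsσ.not_ge
    · rintro s rfl
      exact ⟨⟨ht, hx.symm⟩, hρt, hσt⟩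
  rw [nhdsWithin_restrict' _ (Ioo_mem_nhds hρt hσt), hT, nhdsWithin_singleton]

end TimeScale

section Nabla

variable {E : Type*} [NormedAddCommGroup E] [NormedSpace ℝ E] {T : Set ℝ} {t : ℝ}

theorem hasNablaDerivAt_iff_tendsto_slope {u : ℝ → E} {L : E} :
    HasNablaDerivAt T u t L ↔ Tendsto (slope u (tsRho T t)) (𝓝[T \ {tsRho T t}] t) (𝓝 L) :=
  Iff.rfl

theorem hasDeltaDerivAt_iff_tendsto_slope {u : ℝ → E} {L : E} :
    HasDeltaDerivAt T u t L ↔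
      Tendsto (slope u (tsSigma T t)) (𝓝[T \ {tsSigma T t}] t) (𝓝 L) := by
  have hslope : slope u (tsSigma T t) = fun s => (tsSigma T t - s)⁻¹ • (u (tsSigma T t) - u s) :=
    funext fun s => by rw [slope_comm, slope_def_module]
  rw [hslope]
  rfl

theorem HasNablaDerivAt.inner {F : Type*} [NormedAddCommGroup F] [InnerProductSpace ℝ F]
    {f g : ℝ → F} {A B : F} (ht : t ∈ T) (hf : HasNablaDerivAt T f t A)
    (hg : HasNablaDerivAt T g t B) :
    HasNablaDerivAt T (fun s => ⟪f s, g s⟫) t (⟪A, g t⟫ + ⟪f (tsRho T t), B⟫) := by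
  rw [hasNablaDerivAt_iff_tendsto_slope] at *
  exact ((hf.inner (tendsto_of_tendsto_slope ht hg)).add (tendsto_const_nhds.inner hg)).congr
    fun s => (slope_inner f g _ s).symm

theorem tendsto_slope_tsSigma_atTop (hbd : BddBelow T) (ht : t ∈ T) (hσt : t < tsSigma T t) :
    Tendsto (slope (tsSigma T) t) (𝓝[T \ {t}] t) atTop := by
  have hleft : Iio t ∈ 𝓝[T \ {t}] t := mem_nhdsWithin.2 ⟨Iio (tsSigma T t), isOpen_Iio, hσt,
    fun s ⟨hsσ, hs, hst⟩ => (lt_or_gt_of_ne hst).resolve_right fun hts =>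
      (tsSigma_le hbd hs hts).not_gt hsσ⟩
  have hsub : Tendsto (fun s => s - t) (𝓝[<] t) (𝓝[<] 0) :=
    tendsto_nhdsWithin_iff.2 ⟨by simpa using
      ((continuous_sub_right t).tendsto t).mono_left nhdsWithin_le_nhds,
      eventually_nhdsWithin_of_forall fun s hs => mem_Iio.2 (sub_neg.2 hs)⟩
  have hblow : Tendsto (fun s => (s - t)⁻¹ * (t - tsSigma T t)) (𝓝[T \ {t}] t) atTop :=
    ((tendsto_inv_nhdsLT_zero.comp hsub).atBot_mul_const_of_neg (sub_neg.2 hσt)).mono_left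
      (nhdsWithin_le_iff.2 hleft)
  refine tendsto_atTop_mono' _ ?_ hblow
  filter_upwards [hleft, self_mem_nhdsWithin] with s hst hs
  rw [slope_def_module, smul_eq_mul]
  exact mul_le_mul_of_nonpos_left (by linarith [tsSigma_le hbd ht hst])
    (inv_nonpos.2 (sub_neg.2 hst).le)

theorem tsSigma_tsRho_of_hasNablaDerivAt (hbd : Bornology.IsBounded T) (ht : t ∈ T) {d : ℝ}
    (hσ : HasNablaDerivAt T (tsSigma T) t d) [hF : (𝓝[T \ {tsRho T t}] t).NeBot] :
    tsSigma T (tsRho T t) = t := by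
  rcases (tsRho_le hbd.bddBelow ht).eq_or_lt with hρt | hρt
  · rw [hρt]
    refine ((le_tsSigma hbd.bddAbove ht).eq_or_lt.resolve_right fun hσt => ?_).symm
    rw [hasNablaDerivAt_iff_tendsto_slope, hρt] at hσ
    rw [hρt] at hF
    exact not_tendsto_nhds_of_tendsto_atTop (tendsto_slope_tsSigma_atTop hbd.bddBelow ht hσt) d hσ
  · exact tsSigma_tsRho hbd ht hρt

theorem HasDeltaDerivAt.hasNablaDerivAt_comp_tsSigma {d : ℝ} {u : ℝ → E} {L : E}
    (hne : T.Nonempty) (hbd : Bornology.IsBounded T) (hcl : IsClosed T) (ht : t ∈ T)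
    (hσρ : tsSigma T (tsRho T t) = t) (hσ : HasNablaDerivAt T (tsSigma T) t d)
    (hu : HasDeltaDerivAt T u t L) : HasNablaDerivAt T (u ∘ tsSigma T) t (d • L) := by
  rw [hasNablaDerivAt_iff_tendsto_slope] at hσ ⊢
  rw [hasDeltaDerivAt_iff_tendsto_slope] at hu
  rcases (le_tsSigma hbd.bddAbove ht).eq_or_lt with hσt | hσt
  · rw [← hσt, ← hσρ] at hu
    refine tendsto_slope_comp hσ
      (tendsto_nhdsWithin_iff.2 ⟨?_, .of_forall (tsSigma_mem hne hbd hcl)⟩) hu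
    simpa only [hσρ, ← hσt] using tendsto_of_tendsto_slope ht hσ
  · have hρt : tsRho T t < t := (tsRho_le hbd.bddBelow ht).lt_of_ne fun h => by
      rw [h] at hσρ
      exact hσt.ne' hσρ
    rw [nhdsWithin_diff_singleton_eq_pure_of_isolated hbd ht hρt hσt hρt.ne] at hσ ⊢
    rw [nhdsWithin_diff_singleton_eq_pure_of_isolated hbd ht hρt hσt hσt.ne'] at hu
    have hd := tendsto_nhds_unique (tendsto_pure_nhds _ t) hσ
    have hL := tendsto_nhds_unique (tendsto_pure_nhds _ t) hu
    have hslope : slope (u ∘ tsSigma T) (tsRho T t) t = d • L := by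
      rw [slope_comp_eq_smul_slope, hσρ, slope_comm u t, hd, hL]
    exact hslope ▸ tendsto_pure_nhds _ t

end Nabla

theorem stmt_11_general (T : Set ℝ) (hne : T.Nonempty) (hbd : Bornology.IsBounded T) (hcl : IsClosed T)
    (n : ℕ) (u v : ℝ → EuclideanSpace ℝ (Fin n))
    (t : ℝ) (ht : t ∈ Tup T ∩ Tlow T)
    (d : ℝ) (hσ : HasNablaDerivAt T (tsSigma T) t d)
    (L : EuclideanSpace ℝ (Fin n)) (hu : HasDeltaDerivAt T u t L)
    (M : EuclideanSpace ℝ (Fin n)) (hv : HasNablaDerivAt T v t M) :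
    HasNablaDerivAt T (fun s => ⟪u (tsSigma T s), v s⟫) t
      (⟪u t, M⟫ + d * ⟪L, v t⟫) := by
  have htT : t ∈ T := ht.1.1
  rcases eq_or_neBot (𝓝[T \ {tsRho T t}] t) with hbot | hF
  · rw [HasNablaDerivAt, hbot]
    exact tendsto_bot
  · have hσρ := tsSigma_tsRho_of_hasNablaDerivAt hbd htT hσ
    have h := (hu.hasNablaDerivAt_comp_tsSigma hne hbd hcl htT hσρ hσ).inner htT hv
    rwa [Function.comp_apply, hσρ, real_inner_smul_left, add_comm] at h

/-- Leibniz formula mixing Δ and ∇ derivatives: if `σ` is ∇-differentiable at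
`t ∈ T^κ_κ`, `u` is Δ-differentiable at `t` and `v` is ∇-differentiable at `t`, then
`(u ∘ σ) · v` is ∇-differentiable at `t` with derivative
`u(t) · v^∇(t) + σ^∇(t) (u^Δ(t) · v(t))`. -/
theorem stmt_11 (T : Set ℝ) (hne : T.Nonempty) (hbd : Bornology.IsBounded T) (hcl : IsClosed T)
    (hcard : ∃ x ∈ T, ∃ y ∈ T, ∃ z ∈ T, x ≠ y ∧ x ≠ z ∧ y ≠ z)
    (n : ℕ) (u v : ℝ → EuclideanSpace ℝ (Fin n))
    (t : ℝ) (ht : t ∈ Tup T ∩ Tlow T)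
    (d : ℝ) (hσ : HasNablaDerivAt T (tsSigma T) t d)
    (L : EuclideanSpace ℝ (Fin n)) (hu : HasDeltaDerivAt T u t L)
    (M : EuclideanSpace ℝ (Fin n)) (hv : HasNablaDerivAt T v t M) :
    HasNablaDerivAt T (fun s => ⟪u (tsSigma T s), v s⟫) t
      (⟪u t, M⟫ + d * ⟪L, v t⟫) :=
  stmt_11_general T hne hbd hcl n u v t ht d hσ L hu M hv
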